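/- arXiv:2404.15727 — 2 statements merged into one kernel-verified Lean document; each statement's English description precedes it below -/
import Mathlib

section
/- Let n ≥ 1, 0 ≤ k ≤ n and r ≥ 1. The number of pairs (σ, α) with σ ∈ S_k^n a strictly increasing map {0,…,k} → {0,…,n} and α ∈ ℕ^{n+1} a multi-index with |α| = r−1 and α_i = 0 for all i < σ(0), equals binom(r+k−1, k) · binom(n+r, n−k). -/
open MeasureTheory Matrix

noncomputable section

/-- A differential `k`-form on `ℝⁿ`, recorded via its pointwise evaluation on `k`-tuples of
vectors: `ω x (u 0, …, u (k-1)) : ℝ`. -/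
abbrev Form (n k : ℕ) : Type := (Fin n → ℝ) → (Fin k → (Fin n → ℝ)) → ℝ

/-- `ω` is a polynomial differential form: all coefficient functions are polynomial. -/
def IsPolyForm {n k : ℕ} (ω : Form n k) : Prop :=
  ∀ u : Fin k → (Fin n → ℝ), ∃ p : MvPolynomial (Fin n) ℝ,
    ∀ x, ω x u = MvPolynomial.eval x p

/-- `ω` is a polynomial differential form of degree at most `r`. -/
def IsPolyFormDeg {n k : ℕ} (r : ℕ) (ω : Form n k) : Prop :=
  ∀ u : Fin k → (Fin n → ℝ), ∃ p : MvPolynomial (Fin n) ℝ,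
    p.totalDegree ≤ r ∧ ∀ x, ω x u = MvPolynomial.eval x p

/-- `ω` is a continuous differential form. -/
def ContinuousForm {n k : ℕ} (ω : Form n k) : Prop :=
  ∀ u : Fin k → (Fin n → ℝ), Continuous fun x => ω x u

/-- The standard `k`-simplex `Δᵏ = {x ∈ ℝᵏ : xⱼ ≥ 0, Σⱼ xⱼ ≤ 1}`. -/
def stdSimplexSet (k : ℕ) : Set (Fin k → ℝ) :=
  {x | (∀ j, 0 ≤ x j) ∧ ∑ j, x j ≤ 1}

/-- Integral of the `k`-form `ω` over the affine `k`-simplex with ordered vertices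
`p 0, …, p k`:  `∫_{Δᵏ} ω(p₀ + Σⱼ xⱼ (pⱼ − p₀))(p₁ − p₀, …, p_k − p₀) dx`. -/
def simpIntegral {n k : ℕ} (ω : Form n k) (p : Fin (k + 1) → (Fin n → ℝ)) : ℝ :=
  ∫ x in stdSimplexSet k,
    ω (p 0 + ∑ j : Fin k, x j • (p j.succ - p 0)) (fun j => p j.succ - p 0)

/-- The Whitney form `ω_σ = Σᵢ (−1)ⁱ λ_{σ(i)} dλ_{σ(0)} ∧ … ∧ ω̂ᵢ ∧ … ∧ dλ_{σ(k)}`, where the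
wedge of the (constant) differentials `dλⱼ` is evaluated as a determinant. -/
def whitney {n k : ℕ} (lam : Fin (n + 1) → ((Fin n → ℝ) →ᵃ[ℝ] ℝ))
    (σ : Fin (k + 1) → Fin (n + 1)) : Form n k :=
  fun x u => ∑ i : Fin (k + 1), (-1 : ℝ) ^ (i : ℕ) * lam (σ i) x *
    Matrix.det (Matrix.of fun a b : Fin k => (lam (σ (i.succAbove a))).linear (u b))

/-- `λ^α ω_σ`, the Whitney form scaled by the barycentric monomial `λ^α`. -/
def scaledWhitney {n k : ℕ} (lam : Fin (n + 1) → ((Fin n → ℝ) →ᵃ[ℝ] ℝ))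
    (α : Fin (n + 1) → ℕ) (σ : Fin (k + 1) → Fin (n + 1)) : Form n k :=
  fun x u => (∏ i, lam i x ^ α i) * whitney lam σ x u

/-- The space `P_r^- Λ^k(T)`: the span of `p · ω_σ` for `p` a polynomial of degree `≤ r − 1`
and `σ` strictly increasing. -/
def PrMinus (n k r : ℕ) (lam : Fin (n + 1) → ((Fin n → ℝ) →ᵃ[ℝ] ℝ)) :
    Submodule ℝ (Form n k) :=
  Submodule.span ℝ {η : Form n k | ∃ (p : MvPolynomial (Fin n) ℝ)
    (σ : Fin (k + 1) → Fin (n + 1)), StrictMono σ ∧ p.totalDegree ≤ r - 1 ∧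
    η = fun x u => MvPolynomial.eval x p * whitney lam σ x u}

/-- The small `k`-simplex `s_{(α,σ)}`, given by its ordered vertices
`(v_{σ(j)} + Σᵢ αᵢ vᵢ)/r`. -/
def smallSimplex {n k : ℕ} (v : Fin (n + 1) → (Fin n → ℝ)) (r : ℕ)
    (σ : Fin (k + 1) → Fin (n + 1)) (α : Fin (n + 1) → ℕ) :
    Fin (k + 1) → (Fin n → ℝ) :=
  fun j => (r : ℝ)⁻¹ • (v (σ j) + ∑ i, (α i : ℝ) • v i)

/-- The index set of the minimal set `X_{r,min}^k(T)`: pairs `(σ, α)` with `σ` strictly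
increasing, `|α| = r − 1` and `αᵢ = 0` for every `i < σ(0)`. -/
def MinIdx (n k r : ℕ) : Type :=
  {q : (Fin (k + 1) → Fin (n + 1)) × (Fin (n + 1) → ℕ) //
    StrictMono q.1 ∧ (∑ i, q.2 i) = r - 1 ∧ ∀ i, i < q.1 0 → q.2 i = 0}

/-- The interpolation operator `Π ω = Σᵢ (∫_{sᵢ} ω) ω_{sᵢ}` built from a dual family `ωs`. -/
def lagrangeProj {n k N : ℕ} (s : Fin N → Fin (k + 1) → (Fin n → ℝ))
    (ωs : Fin N → Form n k) (ω : Form n k) : Form n k :=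
  fun x u => ∑ i, simpIntegral ω (s i) * ωs i x u

/-- Least squares error functional `Σᵢ (∫_{sᵢ} (η − ω))²`. -/
def lsError {n k M : ℕ} (s : Fin M → Fin (k + 1) → (Fin n → ℝ))
    (ω η : Form n k) : ℝ :=
  ∑ i, (simpIntegral (η - ω) (s i)) ^ 2

/-! Fibre over `m = σ 0`. The maps `σ` with `σ 0 = m` are strictly increasing `k`-tuples
above `m`, so there are `C(n - m, k)` of them; the `α` vanishing below `m` are multi-indices of
weight `r - 1` on the `n + 1 - m` coordinates `≥ m`, so by stars and bars there are
`C(n - m + r - 1, r - 1)` of them. Since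
`C(j, k) C(j + r - 1, r - 1) = C(r + k - 1, k) C(j + r - 1, r + k - 1)`, the hockey-stick
identity sums the fibres to `C(r + k - 1, k) C(n + r, r + k)`. -/

open Finset

section StrictMono

variable {α β : Type*}

def strictMonoEquivOrderEmbedding [LinearOrder α] [Preorder β] :
    {f : α → β // StrictMono f} ≃ (α ↪o β) where
  toFun f := OrderEmbedding.ofStrictMono f.1 f.2
  invFun e := ⟨e, e.strictMono⟩

theorem natCard_strictMono_fin_eq_choose [LinearOrder β] (k : ℕ) :
    Nat.card {f : Fin k → β // StrictMono f} = (Nat.card β).choose k := by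
  rw [Nat.card_congr (strictMonoEquivOrderEmbedding.trans Set.powersetCard.ofFinEmbEquiv),
    Set.powersetCard.card]

def strictMonoConsEquiv [Preorder β] (k : ℕ) (a : β) :
    {σ : Fin (k + 1) → β // StrictMono σ ∧ σ 0 = a} ≃ {τ : Fin k → Set.Ioi a // StrictMono τ} where
  toFun σ := ⟨fun j => ⟨σ.1 j.succ, lt_of_eq_of_lt σ.2.2.symm (σ.2.1 j.succ_pos)⟩,
    fun _ _ h => σ.2.1 (Fin.succ_lt_succ_iff.2 h)⟩
  invFun τ := ⟨Fin.cons a fun j => τ.1 j, Fin.strictMono_cons.2 ⟨fun j => (τ.1 j).2, τ.2⟩, rfl⟩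
  left_inv σ := by
    ext j
    cases j using Fin.cases with
    | zero => exact σ.2.2.symm
    | succ j => rfl
  right_inv τ := rfl

theorem natCard_strictMono_fin_succ_zero_eq_choose [LinearOrder β] (k : ℕ) (a : β) :
    Nat.card {σ : Fin (k + 1) → β // StrictMono σ ∧ σ 0 = a} =
      (Nat.card (Set.Ioi a)).choose k := by
  rw [Nat.card_congr (strictMonoConsEquiv k a), natCard_strictMono_fin_eq_choose]

end StrictMono

section VanishingOff

variable {ι : Type*} [Fintype ι] (p : ι → Prop) [DecidablePred p]

def vanishingOffEquivSubtype (t : ℕ) :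
    {f : ι → ℕ // ∑ i, f i = t ∧ ∀ i, ¬ p i → f i = 0} ≃ {g : Subtype p → ℕ // ∑ i, g i = t} where
  toFun f := ⟨fun i => f.1 i, by
    have h := Fintype.sum_subtype_add_sum_subtype p f.1
    rw [Finset.sum_eq_zero fun (i : {i // ¬ p i}) _ => f.2.2 i.1 i.2, add_zero] at h
    exact h.trans f.2.1⟩
  invFun g := ⟨fun i => if h : p i then g.1 ⟨i, h⟩ else 0,
    (Fintype.sum_subtype_add_sum_subtype p _).symm.trans <| by
      rw [Finset.sum_eq_zero fun (i : {i // ¬ p i}) _ => dif_neg i.2, add_zero]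
      exact (Finset.sum_congr rfl fun i _ => dif_pos i.2).trans g.2,
    fun i hi => dif_neg hi⟩
  left_inv f := by
    ext i
    by_cases h : p i
    · simp [h]
    · simp [h, f.2.2 i h]
  right_inv g := by ext i; simp [i.2]

instance finite_vanishingOff (t : ℕ) :
    Finite {f : ι → ℕ // ∑ i, f i = t ∧ ∀ i, ¬ p i → f i = 0} := by
  classical
  exact .of_equiv _ ((vanishingOffEquivSubtype p t).trans (Sym.equivNatSumOfFintype _ t).symm).symm

theorem natCard_vanishingOff_eq_choose (t : ℕ) :
    Nat.card {f : ι → ℕ // ∑ i, f i = t ∧ ∀ i, ¬ p i → f i = 0} =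
      (Nat.card (Subtype p) + t - 1).choose t := by
  classical
  rw [Nat.card_congr ((vanishingOffEquivSubtype p t).trans (Sym.equivNatSumOfFintype _ t).symm),
    Sym.natCard_sym_eq_choose]

end VanishingOff

theorem Fin.sum_univ_sub_eq_sum_range {M : Type*} [AddCommMonoid M] (n : ℕ) (f : ℕ → M) :
    ∑ i : Fin (n + 1), f (n - i) = ∑ j ∈ range (n + 1), f j := by
  rw [Fin.sum_univ_eq_sum_range (fun j => f (n - j)), ← sum_range_reflect f (n + 1)]
  simp

theorem Nat.choose_mul_add_choose (j k s : ℕ) :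
    j.choose k * (j + s).choose s = (s + k).choose k * (j + s).choose (s + k) := by
  have h := Nat.choose_mul (n := j + s) (k := s + k) (s := s) (Nat.le_add_right s k)
  rw [Nat.add_sub_cancel, Nat.add_sub_cancel_left, Nat.choose_symm_add] at h
  rw [mul_comm, ← h, mul_comm]

theorem Nat.sum_range_choose_mul_add_choose {n k : ℕ} (hk : k ≤ n) (s : ℕ) :
    ∑ j ∈ range (n + 1), j.choose k * (j + s).choose s =
      (s + k).choose k * (n + s + 1).choose (n - k) := by
  simp_rw [Nat.choose_mul_add_choose, ← mul_sum]
  congr 1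
  obtain ⟨d, rfl⟩ := Nat.exists_eq_add_of_le hk
  have below_k : ∑ j ∈ range k, (j + s).choose (s + k) = 0 :=
    sum_eq_zero fun j hj => Nat.choose_eq_zero_of_lt (by have := mem_range.1 hj; omega)
  rw [show k + d + 1 = k + (d + 1) by omega, sum_range_add, below_k, zero_add]
  simp only [show ∀ x, k + x + s = x + (s + k) from fun x => by omega]
  rw [Nat.sum_range_add_choose d (s + k), Nat.add_sub_cancel_left]
  exact Nat.choose_symm_of_eq_add (by omega)

def minIdxEquivSigma (n k r : ℕ) :
    MinIdx n k r ≃ Σ m : Fin (n + 1),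
      {σ : Fin (k + 1) → Fin (n + 1) // StrictMono σ ∧ σ 0 = m} ×
        {α : Fin (n + 1) → ℕ // ∑ i, α i = r - 1 ∧ ∀ i, ¬ m ≤ i → α i = 0} where
  toFun q := ⟨q.1.1 0, ⟨q.1.1, q.2.1, rfl⟩, ⟨q.1.2, q.2.2.1, fun i hi => q.2.2.2 i (not_le.1 hi)⟩⟩
  invFun x := ⟨(x.2.1.1, x.2.2.1), x.2.1.2.1, x.2.2.2.1,
    fun i hi => x.2.2.2.2 i (not_le.2 (x.2.1.2.2 ▸ hi))⟩
  right_inv := by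
    rintro ⟨m, ⟨σ, hσ, rfl⟩, α⟩
    rfl

theorem card_minIdx_general {n k r : ℕ} (hk : k ≤ n) (hr : 1 ≤ r) :
    Nat.card (MinIdx n k r) = (r + k - 1).choose k * (n + r).choose (n - k) := by
  have card_fiber (m : Fin (n + 1)) :
      Nat.card ({σ : Fin (k + 1) → Fin (n + 1) // StrictMono σ ∧ σ 0 = m} ×
        {α : Fin (n + 1) → ℕ // ∑ i, α i = r - 1 ∧ ∀ i, ¬ m ≤ i → α i = 0}) =
        (n - m).choose k * (n - m + (r - 1)).choose (r - 1) := by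
    have card_Ici : Nat.card {i // m ≤ i} = n + 1 - m := by
      change Nat.card (Set.Ici m) = _
      simp
    rw [Nat.card_prod, natCard_strictMono_fin_succ_zero_eq_choose, natCard_vanishingOff_eq_choose,
      card_Ici, show n + 1 - m + (r - 1) - 1 = n - m + (r - 1) by omega]
    simp
  rw [Nat.card_congr (minIdxEquivSigma n k r), Nat.card_sigma]
  simp_rw [card_fiber]
  rw [Fin.sum_univ_sub_eq_sum_range n (fun j => j.choose k * (j + (r - 1)).choose (r - 1)),
    Nat.sum_range_choose_mul_add_choose hk, show r - 1 + k = r + k - 1 by omega,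
    show n + (r - 1) + 1 = n + r by omega]

/-- The number of pairs `(σ, α)` with `σ ∈ S_k^n` strictly increasing,
`|α| = r − 1` and `αᵢ = 0` for all `i < σ(0)` equals
`binom(r+k−1, k) · binom(n+r, n−k)`. -/
theorem card_minIdx {n k r : ℕ} (hn : 1 ≤ n) (hk : k ≤ n) (hr : 1 ≤ r) :
    Nat.card (MinIdx n k r) = (r + k - 1).choose k * (n + r).choose (n - k) :=
  card_minIdx_general hk hr
end
end

section
/- (Generic unisolvence.) Let n ≥ 1, 1 ≤ k ≤ n and r ≥ 1, set N := binom(r+k−1, k)·binom(n+r, n−k), and fix a basis (ω_1,…,ω_N) of P_r^− Λ^k(T). Call a collection S = (s_1,…,s_N) of N ordered affine k-simplices in ℝ^n, identified with a point of ((ℝ^n)^{k+1})^N via the vertices of each s_i, unisolvent if the N×N Vandermonde matrix V with entries V_{ij} = ∫_{s_i} ω_j is invertible. Then the set of unisolvent collections is open and dense in ((ℝ^n)^{k+1})^N ≅ ℝ^{n(k+1)N}. In particular, every non-unisolvent collection can be perturbed by an arbitrarily small amount to obtain a unisolvent one. -/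
open MeasureTheory Matrix

noncomputable section

/-!
The Vandermonde determinant is a polynomial in the coordinates of the vertices: every form in
`P_r^- Λ^k` is polynomial jointly in the point and the `k` vectors, and integrating a polynomial
over `Δᵏ` in some of its variables leaves a polynomial in the others. Its non-vanishing set is
therefore open, and dense unless the determinant vanishes identically (identity theorem). It does
not: the forms are `k`-homogeneous in the vectors, so `ε⁻ᵏ` times the integral over the simplex
`x, x + εu₁, …, x + εu_k` tends to `vol(Δᵏ) ω(x)(u₁, …, u_k)` as `ε → 0`. Hence the integration
functionals separate `P_r^- Λ^k`, so they span its dual, and `N` of them forming a basis of the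
dual give a collection with non-zero determinant.
-/

open MvPolynomial

def mvPolyFunctions (ι : Type*) : Subalgebra ℝ ((ι → ℝ) → ℝ) :=
  (aeval fun i (x : ι → ℝ) => x i).range

section MvPolyFunctions

variable {ι κ : Type*}

theorem mem_mvPolyFunctions {F : (ι → ℝ) → ℝ} :
    F ∈ mvPolyFunctions ι ↔ ∃ P : MvPolynomial ι ℝ, ∀ x, F x = eval x P := by
  have aeval_apply (P : MvPolynomial ι ℝ) (x : ι → ℝ) :
      aeval (fun i (x : ι → ℝ) => x i) P x = eval x P := by
    induction P using MvPolynomial.induction_on <;> simp_all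
  simp only [mvPolyFunctions, AlgHom.mem_range, funext_iff, aeval_apply, eq_comm]

theorem coord_mem_mvPolyFunctions (i : ι) : (fun x : ι → ℝ => x i) ∈ mvPolyFunctions ι :=
  mem_mvPolyFunctions.2 ⟨X i, by simp⟩

theorem const_mem_mvPolyFunctions (c : ℝ) : (fun _ : ι → ℝ => c) ∈ mvPolyFunctions ι :=
  algebraMap_mem _ c

theorem sum_mem_mvPolyFunctions {α : Type*} {s : Finset α} {F : α → (ι → ℝ) → ℝ}
    (hF : ∀ a ∈ s, F a ∈ mvPolyFunctions ι) :
    (fun x => ∑ a ∈ s, F a x) ∈ mvPolyFunctions ι := by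
  simpa only [← Finset.sum_apply] using sum_mem hF

theorem det_mem_mvPolyFunctions {m : Type*} [Fintype m] [DecidableEq m]
    {E : m → m → (ι → ℝ) → ℝ} (hE : ∀ i j, E i j ∈ mvPolyFunctions ι) :
    (fun x => (Matrix.of fun i j => E i j x).det) ∈ mvPolyFunctions ι := by
  let E' : Matrix m m (mvPolyFunctions ι) := Matrix.of fun i j => ⟨E i j, hE i j⟩
  convert ((E'.det).2 : _ ∈ mvPolyFunctions ι) using 1
  funext x
  change _ = Pi.evalRingHom _ x ((mvPolyFunctions ι).val E'.det)
  rw [AlgHom.map_det, RingHom.map_det]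
  rfl

theorem comp_mem_mvPolyFunctions {F : (κ → ℝ) → ℝ} (hF : F ∈ mvPolyFunctions κ)
    {g : κ → (ι → ℝ) → ℝ} (hg : ∀ a, g a ∈ mvPolyFunctions ι) :
    (fun x => F fun a => g a x) ∈ mvPolyFunctions ι := by
  choose Q hQ using fun a => mem_mvPolyFunctions.1 (hg a)
  obtain ⟨P, hP⟩ := mem_mvPolyFunctions.1 hF
  refine mem_mvPolyFunctions.2 ⟨bind₁ Q P, fun x => ?_⟩
  simp only [hP, hQ, eval, eval₂Hom_bind₁]

theorem linearMap_mem_mvPolyFunctions [Fintype ι] (l : (ι → ℝ) →ₗ[ℝ] ℝ) :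
    ⇑l ∈ mvPolyFunctions ι := by
  classical
  refine mem_mvPolyFunctions.2
    ⟨∑ i, C (l fun j => if i = j then 1 else 0) * X i, fun x => ?_⟩
  simp [l.pi_apply_eq_sum_univ x, mul_comm]

theorem affineMap_mem_mvPolyFunctions [Fintype ι] (l : (ι → ℝ) →ᵃ[ℝ] ℝ) :
    ⇑l ∈ mvPolyFunctions ι := by
  rw [l.decomp]
  exact add_mem (linearMap_mem_mvPolyFunctions _) (algebraMap_mem _ (l 0))

theorem continuous_of_mem_mvPolyFunctions {F : (ι → ℝ) → ℝ} (hF : F ∈ mvPolyFunctions ι) :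
    Continuous F := by
  obtain ⟨P, hP⟩ := mem_mvPolyFunctions.1 hF
  simpa only [← funext hP] using MvPolynomial.continuous_eval P

theorem integral_mem_mvPolyFunctions [Fintype ι] [Fintype κ] {μ : Measure (ι → ℝ)}
    [IsFiniteMeasureOnCompacts μ] {s : Set (ι → ℝ)} (hs : IsCompact s)
    {F : (ι ⊕ κ → ℝ) → ℝ} (hF : F ∈ mvPolyFunctions (ι ⊕ κ)) :
    (fun w => ∫ y in s, F (Sum.elim y w) ∂μ) ∈ mvPolyFunctions κ := by
  obtain ⟨P, hP⟩ := mem_mvPolyFunctions.1 hF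
  simp only [hP]
  clear hP hF
  induction P using MvPolynomial.induction_on' with
  | monomial d a =>
    refine mem_mvPolyFunctions.2
      ⟨C (a * ∫ y in s, ∏ i, y i ^ d (.inl i) ∂μ) * ∏ c, X c ^ d (.inr c), fun w => ?_⟩
    simp only [eval_monomial, Finsupp.prod_fintype _ _ (fun _ => pow_zero _),
      Fintype.prod_sum_type, Sum.elim_inl, Sum.elim_inr, eval_C, eval_X, map_mul, map_prod,
      map_pow]
    rw [← integral_const_mul, ← integral_mul_const]
    congr 1
    funext y
    ring
  | add P Q hP hQ =>
    have hint (R : MvPolynomial (ι ⊕ κ) ℝ) (w : κ → ℝ) :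
        IntegrableOn (fun y => eval (Sum.elim y w) R) s μ :=
      ((MvPolynomial.continuous_eval R).comp (continuous_pi fun x => by
        rcases x with i | c
        exacts [continuous_apply i, continuous_const])).continuousOn.integrableOn_compact hs
    simp only [map_add]
    simp only [fun w => integral_add (hint P w) (hint Q w)]
    exact add_mem hP hQ

end MvPolyFunctions

/-- Forms that are polynomial jointly in the point `x` and the vectors `u`; the coordinates of
`(x, u)` are indexed by `Fin n ⊕ Fin k × Fin n`. -/
def polynomialForms (n k : ℕ) : Submodule ℝ (Form n k) :=
  (mvPolyFunctions (Fin n ⊕ Fin k × Fin n)).toSubmodule.comap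
    ({ toFun ω z := ω (fun a => z (.inl a)) (fun j c => z (.inr (j, c)))
       map_add' _ _ := rfl
       map_smul' _ _ := rfl } : Form n k →ₗ[ℝ] _)

def homogeneousForms (n k : ℕ) : Submodule ℝ (Form n k) where
  carrier := {ω | ∀ x u (c : ℝ), ω x (c • u) = c ^ k * ω x u}
  add_mem' hω hη x u c := by simp only [Pi.add_apply, hω x u c, hη x u c, mul_add]
  zero_mem' x u c := by simp
  smul_mem' a _ hω x u c := by simp only [Pi.smul_apply, smul_eq_mul, hω x u c]; ring

section Forms

variable {n k : ℕ}

theorem mem_polynomialForms {ω : Form n k} : ω ∈ polynomialForms n k ↔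
    (fun z : Fin n ⊕ Fin k × Fin n → ℝ =>
      ω (fun a => z (.inl a)) (fun j c => z (.inr (j, c)))) ∈ mvPolyFunctions _ :=
  Iff.rfl

theorem whitney_mem_polynomialForms (lam : Fin (n + 1) → ((Fin n → ℝ) →ᵃ[ℝ] ℝ))
    (σ : Fin (k + 1) → Fin (n + 1)) : whitney lam σ ∈ polynomialForms n k := by
  rw [mem_polynomialForms]
  unfold whitney
  refine sum_mem_mvPolyFunctions fun i _ =>
    mul_mem (mul_mem (const_mem_mvPolyFunctions _) ?_) ?_
  · exact comp_mem_mvPolyFunctions (affineMap_mem_mvPolyFunctions _)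
      fun a => coord_mem_mvPolyFunctions (Sum.inl a)
  · exact det_mem_mvPolyFunctions fun a b => comp_mem_mvPolyFunctions
      (linearMap_mem_mvPolyFunctions _) fun c => coord_mem_mvPolyFunctions (Sum.inr (b, c))

theorem whitney_mem_homogeneousForms (lam : Fin (n + 1) → ((Fin n → ℝ) →ᵃ[ℝ] ℝ))
    (σ : Fin (k + 1) → Fin (n + 1)) : whitney lam σ ∈ homogeneousForms n k := by
  intro x u c
  simp only [whitney, Finset.mul_sum, Pi.smul_apply, map_smul, smul_eq_mul]
  refine Finset.sum_congr rfl fun i _ => ?_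
  have : (Matrix.of fun a b => c * (lam (σ (i.succAbove a))).linear (u b))
      = c • Matrix.of fun a b => (lam (σ (i.succAbove a))).linear (u b) := rfl
  rw [this, Matrix.det_smul, Fintype.card_fin]
  ring

theorem PrMinus_le_polynomialForms_inf_homogeneousForms (r : ℕ)
    (lam : Fin (n + 1) → ((Fin n → ℝ) →ᵃ[ℝ] ℝ)) :
    PrMinus n k r lam ≤ polynomialForms n k ⊓ homogeneousForms n k := by
  refine Submodule.span_le.2 ?_
  rintro _ ⟨p, σ, -, -, rfl⟩
  refine ⟨mem_polynomialForms.2 (mul_mem ?_ (whitney_mem_polynomialForms lam σ)),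
    fun x u c => ?_⟩
  · exact comp_mem_mvPolyFunctions (mem_mvPolyFunctions.2 ⟨p, fun _ => rfl⟩)
      fun a => coord_mem_mvPolyFunctions (Sum.inl a)
  · simp only [whitney_mem_homogeneousForms lam σ x u c]
    ring

theorem continuous_comp_of_mem_polynomialForms {ω : Form n k} (hω : ω ∈ polynomialForms n k)
    {E : Type*} [TopologicalSpace E] {f : E → Fin n → ℝ} {g : E → Fin k → Fin n → ℝ}
    (hf : Continuous f) (hg : Continuous g) : Continuous fun e => ω (f e) (g e) :=
  (continuous_of_mem_mvPolyFunctions hω).comp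
    (f := fun e => Sum.elim (f e) fun q : Fin k × Fin n => g e q.1 q.2) <| continuous_pi fun z => by
      rcases z with a | ⟨j, c⟩
      exacts [(continuous_apply a).comp hf,
        (continuous_apply c).comp ((continuous_apply j).comp hg)]

end Forms

section StdSimplex

variable {k : ℕ}

theorem isClosed_stdSimplexSet : IsClosed (stdSimplexSet k) := by
  simp only [stdSimplexSet, Set.ofPred_and, Set.ofPred_forall]
  exact (isClosed_iInter fun j => isClosed_le continuous_const (continuous_apply j)).inter
    (isClosed_le (by fun_prop) continuous_const)

theorem measurableSet_stdSimplexSet : MeasurableSet (stdSimplexSet k) :=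
  isClosed_stdSimplexSet.measurableSet

theorem isCompact_stdSimplexSet : IsCompact (stdSimplexSet k) :=
  isCompact_Icc.of_isClosed_subset isClosed_stdSimplexSet fun _ hx =>
    ⟨hx.1, fun j => (Finset.single_le_sum (fun i _ => hx.1 i) (Finset.mem_univ j)).trans hx.2⟩

theorem volume_stdSimplexSet_pos : 0 < volume (stdSimplexSet k) := by
  have hsub : Set.Icc 0 (fun _ => ((k : ℝ) + 1)⁻¹) ⊆ stdSimplexSet k := fun x hx => by
    refine ⟨hx.1, (Finset.sum_le_sum fun j _ => hx.2 j).trans ?_⟩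
    rw [Finset.sum_const, Finset.card_univ, Fintype.card_fin, nsmul_eq_mul,
      ← div_eq_mul_inv, div_le_one (by positivity)]
    linarith
  refine lt_of_lt_of_le ?_ (measure_mono hsub)
  simp only [Real.volume_Icc_pi, Pi.zero_apply, sub_zero, Finset.prod_const, Finset.card_univ,
    Fintype.card_fin]
  positivity

end StdSimplex

section SimplexIntegral

variable {n k : ℕ}

theorem integrableOn_simpIntegrand {ω : Form n k} (hω : ω ∈ polynomialForms n k)
    (p : Fin (k + 1) → Fin n → ℝ) :
    IntegrableOn (fun x => ω (p 0 + ∑ j : Fin k, x j • (p j.succ - p 0))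
      (fun j => p j.succ - p 0)) (stdSimplexSet k) :=
  (continuous_comp_of_mem_polynomialForms hω (by fun_prop) continuous_const).continuousOn
    |>.integrableOn_compact isCompact_stdSimplexSet

def simpIntegralₗ (p : Fin (k + 1) → Fin n → ℝ) : polynomialForms n k →ₗ[ℝ] ℝ where
  toFun ω := simpIntegral ω.1 p
  map_add' ω η :=
    integral_add (integrableOn_simpIntegrand ω.2 p) (integrableOn_simpIntegrand η.2 p)
  map_smul' c _ := integral_const_mul c _

theorem simpIntegral_mem_mvPolyFunctions {ω : Form n k} (hω : ω ∈ polynomialForms n k) :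
    (fun z : Fin (k + 1) × Fin n → ℝ => simpIntegral ω fun a c => z (a, c))
      ∈ mvPolyFunctions _ := by
  let g : Fin n ⊕ Fin k × Fin n → (Fin k ⊕ Fin (k + 1) × Fin n → ℝ) → ℝ := Sum.elim
    (fun a w => w (.inr (0, a)) + ∑ j, w (.inl j) * (w (.inr (j.succ, a)) - w (.inr (0, a))))
    (fun q w => w (.inr (q.1.succ, q.2)) - w (.inr (0, q.2)))
  have hg : ∀ z, g z ∈ mvPolyFunctions _ := by
    rintro (a | ⟨j, c⟩)
    · exact mem_mvPolyFunctions.2 ⟨X (.inr (0, a)) + ∑ j : Fin k, X (.inl j) *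
        (X (.inr (j.succ, a)) - X (.inr (0, a))), fun w => by simp [g]⟩
    · exact mem_mvPolyFunctions.2 ⟨X (.inr (j.succ, c)) - X (.inr (0, c)), fun w => by simp [g]⟩
  convert integral_mem_mvPolyFunctions (μ := volume) isCompact_stdSimplexSet
    (comp_mem_mvPolyFunctions hω hg) using 2 with z
  refine setIntegral_congr_fun measurableSet_stdSimplexSet fun y _ => congrArg₂ ω ?_ rfl
  ext a
  simp [g]

theorem eq_zero_of_forall_simpIntegral_eq_zero {ω : Form n k}
    (hω : ω ∈ polynomialForms n k ⊓ homogeneousForms n k)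
    (h : ∀ p, simpIntegral ω p = 0) : ω = 0 := by
  funext x u
  set G : ℝ → ℝ := fun ε => ∫ y in stdSimplexSet k, ω (x + ε • ∑ j, y j • u j) u
  have hG : Continuous G := continuous_parametric_integral_of_continuous
    (f := fun ε y => ω (x + ε • ∑ j, y j • u j) u)
    (continuous_comp_of_mem_polynomialForms hω.1 (by fun_prop) continuous_const)
    isCompact_stdSimplexSet
  have hG_pos : ∀ ε, 0 < ε → G ε = 0 := by
    intro ε hε
    have hscale : simpIntegral ω (Fin.cons x fun j => x + ε • u j) = ε ^ k * G ε := by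
      rw [simpIntegral, ← integral_const_mul]
      refine setIntegral_congr_fun measurableSet_stdSimplexSet fun y _ => ?_
      simp only [Fin.cons_zero, Fin.cons_succ, add_sub_cancel_left, smul_comm (y _) ε,
        ← Finset.smul_sum]
      exact hω.2 _ u ε
    simpa [hscale, hε.ne'] using h (Fin.cons x fun j => x + ε • u j)
  have hG_zero : G 0 = 0 :=
    (isClosed_eq hG continuous_const).closure_subset_iff.2 hG_pos
      (closure_Ioi (0 : ℝ) ▸ Set.self_mem_Ici)
  have hvol : volume.real (stdSimplexSet k) ≠ 0 :=
    (ENNReal.toReal_pos volume_stdSimplexSet_pos.ne' isCompact_stdSimplexSet.measure_ne_top).ne'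
  simpa [G, hvol] using hG_zero

end SimplexIntegral

theorem exists_det_ne_zero_of_separating {K V X : Type*} [Field K] [AddCommGroup V]
    [Module K V] {N : ℕ} (b : Module.Basis (Fin N) K V) (φ : X → Module.Dual K V)
    (hφ : ∀ v, (∀ x, φ x v = 0) → v = 0) :
    ∃ S : Fin N → X, (Matrix.of fun i j => φ (S i) (b j)).det ≠ 0 := by
  have : Module.Finite K V := Module.Finite.of_basis b
  have hspan : Submodule.span K (Set.range φ) = ⊤ := by
    have hco : (Submodule.span K (Set.range φ)).dualCoannihilator = ⊥ :=
      eq_bot_iff.2 fun v hv => hφ v fun x =>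
        (Submodule.mem_dualCoannihilator v).1 hv _ (Submodule.subset_span ⟨x, rfl⟩)
    rw [← Subspace.dualCoannihilator_dualAnnihilator_eq (W := Submodule.span K (Set.range φ)),
      hco, Submodule.dualAnnihilator_bot]
  obtain ⟨κ, a, -, hsp, hli⟩ := exists_linearIndependent' K φ
  let B := Module.Basis.mk hli (by rw [hsp, hspan])
  let e := B.indexEquiv b.dualBasis
  refine ⟨a ∘ e.symm, fun hdet => ?_⟩
  have hunit := b.dualBasis.isUnit_det (B.reindex e)
  rw [Module.Basis.det_apply, ← Matrix.det_transpose] at hunit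
  refine hunit.ne_zero (Eq.trans ?_ hdet)
  congr 1
  ext i j
  simp [Module.Basis.toMatrix_apply, B]

theorem AnalyticOnNhd.dense_setOf_ne_zero {E F : Type*} [NormedAddCommGroup E]
    [NormedSpace ℝ E] [NormedAddCommGroup F] [NormedSpace ℝ F] {f : E → F}
    (hf : AnalyticOnNhd ℝ f Set.univ) (hne : ∃ x, f x ≠ 0) : Dense {x | f x ≠ 0} := by
  refine dense_iff_inter_open.2 fun U hU ⟨x, hx⟩ => ?_
  by_contra hempty
  have hzero : f =ᶠ[nhds x] 0 := Filter.eventuallyEq_of_mem (hU.mem_nhds hx) fun y hy =>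
    not_not.1 fun hy' => hempty ⟨y, hy, hy'⟩
  obtain ⟨x₀, hx₀⟩ := hne
  exact hx₀ (hf.eqOn_zero_of_preconnected_of_eventuallyEq_zero isPreconnected_univ
    (Set.mem_univ x) hzero (Set.mem_univ x₀))

theorem analyticOnNhd_det_simpIntegral {n k N : ℕ} {ω : Fin N → Form n k}
    (hω : ∀ j, ω j ∈ polynomialForms n k) :
    AnalyticOnNhd ℝ (fun S : Fin N → Fin (k + 1) → Fin n → ℝ =>
      (Matrix.of fun i j => simpIntegral (ω j) (S i)).det) Set.univ := by
  obtain ⟨P, hP⟩ := mem_mvPolyFunctions.1 <| det_mem_mvPolyFunctions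
    (E := fun i j (w : Fin N × (Fin (k + 1) × Fin n) → ℝ) =>
      simpIntegral (ω j) fun a c => w (i, (a, c)))
    fun i j => comp_mem_mvPolyFunctions (simpIntegral_mem_mvPolyFunctions (hω j))
      fun q => coord_mem_mvPolyFunctions (i, q)
  have hD : (fun S : Fin N → Fin (k + 1) → Fin n → ℝ =>
      (Matrix.of fun i j => simpIntegral (ω j) (S i)).det)
      = fun S => eval (fun q => S q.1 q.2.1 q.2.2) P :=
    funext fun S => hP fun q => S q.1 q.2.1 q.2.2
  rw [hD]
  exact (AnalyticOnNhd.eval_mvPolynomial P).comp (AnalyticOnNhd.pi fun q =>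
    ((ContinuousLinearMap.proj q.2.2).comp ((ContinuousLinearMap.proj q.2.1).comp
      (ContinuousLinearMap.proj (R := ℝ) (φ := fun _ : Fin N => Fin (k + 1) → Fin n → ℝ) q.1)))
      |>.analyticOnNhd _)
    (Set.mapsTo_univ _ _)

theorem generic_unisolvence_general {n k r : ℕ}
    (lam : Fin (n + 1) → ((Fin n → ℝ) →ᵃ[ℝ] ℝ)) (N : ℕ)
    (b : Module.Basis (Fin N) ℝ (PrMinus n k r lam)) :
    IsOpen {S : Fin N → Fin (k + 1) → (Fin n → ℝ) |
        (Matrix.of fun i j : Fin N => simpIntegral (b j).val (S i)).det ≠ 0} ∧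
    Dense {S : Fin N → Fin (k + 1) → (Fin n → ℝ) |
        (Matrix.of fun i j : Fin N => simpIntegral (b j).val (S i)).det ≠ 0} := by
  have hle := PrMinus_le_polynomialForms_inf_homogeneousForms (k := k) r lam
  have hD := analyticOnNhd_det_simpIntegral fun j => (hle (b j).2).1
  obtain ⟨S, hS⟩ := exists_det_ne_zero_of_separating b
    (fun p => (simpIntegralₗ p).comp (Submodule.inclusion (hle.trans inf_le_left)))
    fun ω hω => Subtype.ext (eq_zero_of_forall_simpIntegral_eq_zero (hle ω.2) hω)
  exact ⟨isOpen_ne_fun hD.continuous continuous_const, hD.dense_setOf_ne_zero ⟨S, hS⟩⟩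

/-- (Generic unisolvence.) Fixing a basis of `P_r^- Λ^k(T)`, the set of
collections of `N` ordered `k`-simplices whose Vandermonde matrix `V_{ij} = ∫_{sᵢ} ωⱼ` is
invertible is open and dense in `((ℝⁿ)^{k+1})^N`. -/
theorem generic_unisolvence {n k r : ℕ} (hn : 1 ≤ n) (hk1 : 1 ≤ k) (hk : k ≤ n) (hr : 1 ≤ r)
    (v : Fin (n + 1) → (Fin n → ℝ)) (hv : AffineIndependent ℝ v)
    (lam : Fin (n + 1) → ((Fin n → ℝ) →ᵃ[ℝ] ℝ))
    (hlam : ∀ i j, lam i (v j) = if i = j then 1 else 0)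
    (N : ℕ) (hN : N = (r + k - 1).choose k * (n + r).choose (n - k))
    (b : Module.Basis (Fin N) ℝ (PrMinus n k r lam)) :
    IsOpen {S : Fin N → Fin (k + 1) → (Fin n → ℝ) |
        (Matrix.of fun i j : Fin N => simpIntegral (b j).val (S i)).det ≠ 0} ∧
    Dense {S : Fin N → Fin (k + 1) → (Fin n → ℝ) |
        (Matrix.of fun i j : Fin N => simpIntegral (b j).val (S i)).det ≠ 0} :=
  generic_unisolvence_general lam N b
end
end
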